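/- Let m ≥ 2 and let u, v be words with |c(u)| ≥ 2 and |c(v)| ≥ 2. If h_m(u) = h_m(v), then h_m(s(u)) = h_m(s(v)). (Equivalently, by the Gerhard–Petrich solution of the word problem for 𝒜_m: if the band variety 𝒜_m satisfies the identity u ≈ v, where both u and v contain at least two distinct letters, then 𝒜_m satisfies s(u) ≈ s(v).) -/

import Mathlib

/-! ### Words and word functions -/

/-- The word `w^{(i j)}`: replace every occurrence of the letter `i` by `j`. -/
def subst {X : Type*} [DecidableEq X] (w : List X) (i j : X) : List X :=
  w.map fun t => if t = i then j else t

/-- The prefix `s(w)`: the longest prefix of `w` containing all but one of the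
letters of `c(w)` (the empty word if `w` is empty). -/
def wordS {X : Type*} [DecidableEq X] (w : List X) : List X :=
  w.take (w.toFinset.sup fun x => w.idxOf x)

/-- The letter `σ(w)` (the last letter of `w` to occur from the left), as a word of
length at most one; `s(w) ++ σ(w)` is the shortest prefix of `w` with full content. -/
def wordSigma {X : Type*} [DecidableEq X] (w : List X) : List X :=
  (w.drop (w.toFinset.sup fun x => w.idxOf x)).take 1

/-- The suffix `e(w)`, dual to `s(w)`. -/
def wordE {X : Type*} [DecidableEq X] (w : List X) : List X :=
  (wordS w.reverse).reverse

/-- The letter `ε(w)` (as a word of length at most one), dual to `σ(w)`. -/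
def wordEps {X : Type*} [DecidableEq X] (w : List X) : List X :=
  (wordSigma w.reverse).reverse

/-- The initial part `i₂(w)`: retain only the first occurrence from the left of
each letter of `w`. -/
def initPart {X : Type*} [DecidableEq X] (w : List X) : List X :=
  w.reverse.dedup.reverse

/-- The dual `F̄` of a word function `F`: `F̄(w) = reverse (F (reverse w))`. -/
def dualW {X : Type*} (F : List X → List X) (w : List X) : List X :=
  (F w.reverse).reverse

theorem wordS_length_lt {X : Type*} [DecidableEq X] {w : List X} (hw : w ≠ []) :
    (wordS w).length < w.length := by
  have hpos : 0 < w.length := List.length_pos_iff.mpr hw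
  have hk : (w.toFinset.sup fun x => w.idxOf x) < w.length := by
    rw [Finset.sup_lt_iff hpos]
    intro x hx
    exact List.idxOf_lt_length_iff.mpr (List.mem_toFinset.mp hx)
  simp only [wordS, List.length_take]
  omega

/-- The common recursion defining the word functions `h_m` and `i_m` of Gerhard
and Petrich: `t_m(w) = t_m(s(w)) · σ(w) · t̄_{m-1}(w)` for `m ≥ 3`, where the base
function (`h₂` = first letter, `i₂` = initial part) is a parameter, and all
functions send the empty word to the empty word. -/
def tW {X : Type*} [DecidableEq X] (base : List X → List X) : ℕ → List X → List X
  | m, w =>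
    if hw : w = [] then []
    else if hm : m ≤ 2 then base w
    else tW base m (wordS w) ++ wordSigma w ++ (tW base (m - 1) w.reverse).reverse
termination_by m w => m + w.length
decreasing_by
  · have := wordS_length_lt hw; omega
  · (try simp [List.length_reverse]) <;> omega

/-- The word function `h_m` (`m ≥ 2`): `h₂(w)` is the first letter of `w`, and
`h_m(w) = h_m(s(w)) · σ(w) · h̄_{m-1}(w)` for `m ≥ 3`. -/
def hW {X : Type*} [DecidableEq X] : ℕ → List X → List X :=
  tW fun w => w.take 1

/-- The word function `i_m` (`m ≥ 2`): `i₂(w)` is the initial part of `w`, and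
`i_m(w) = i_m(s(w)) · σ(w) · ī_{m-1}(w)` for `m ≥ 3`. -/
def iW {X : Type*} [DecidableEq X] : ℕ → List X → List X :=
  tW initPart

/-! ### Operations induced by words -/

/-- Evaluation of a word `w` over the alphabet `X` in a semigroup `S` under the
assignment `a : X → S`, computed in the monoid `WithOne S` (so that the empty word
evaluates to `1` and a nonempty word to the coercion of its value in `S`). -/
def evalW {X S : Type*} [Semigroup S] (a : X → S) (w : List X) : WithOne S :=
  (w.map fun t => (a t : WithOne S)).prod

/-- The identification minor `f_{i j}` of an `n`-ary operation: the `i`-th argument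
is replaced by the `j`-th. -/
def minor {α β : Type*} {n : ℕ} (f : (Fin n → α) → β) (i j : Fin n) :
    (Fin n → α) → β :=
  fun a => f (Function.update a i (a j))

/-- `f` depends on its `i`-th variable. -/
def DependsOnVar {α β : Type*} {n : ℕ} (f : (Fin n → α) → β) (i : Fin n) : Prop :=
  ∃ a b : Fin n → α, (∀ k : Fin n, k ≠ i → a k = b k) ∧ f a ≠ f b

/-- `f : Sⁿ → S` is induced by a (nonempty) word over `X_n = {x_1, …, x_n}`. -/
def InducedByWord {S : Type*} [Semigroup S] {n : ℕ} (f : (Fin n → S) → S) : Prop :=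
  ∃ w : List (Fin n), w ≠ [] ∧ ∀ a : Fin n → S, (f a : WithOne S) = evalW a w

/-!
For `m ≥ 3` the recursion `h_m(w) = h_m(s(w)) σ(w) h̄_{m-1}(w)` together with
`c(h_m(w)) = c(w)` shows that `h_m(s(w))` is exactly the prefix `s(h_m(w))`: it contains every
letter of `w` but `σ(w)`, which comes right after it. Hence `h_m(s(w))` is determined by
`h_m(w)`. For `m = 2` both `h₂(s(w))` and `h₂(w)` are the first letter of `w`, because `s(w)`
is nonempty as soon as `w` has two distinct letters.
-/

section

variable {X : Type*} [DecidableEq X]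

theorem sup_idxOf_append_cons {p r : List X} {σ : X} (hσ : σ ∉ p)
    (hr : ∀ x ∈ r, x ∈ p ∨ x = σ) :
    ((p ++ σ :: r).toFinset.sup fun x => (p ++ σ :: r).idxOf x) = p.length := by
  have hidxσ : (p ++ σ :: r).idxOf σ = p.length := by
    simp [List.idxOf_append_of_notMem hσ]
  apply le_antisymm
  · refine Finset.sup_le fun x hx => ?_
    have hx' : x ∈ p ∨ x = σ := by
      simp only [List.mem_toFinset, List.mem_append, List.mem_cons] at hx
      rcases hx with hx | hx | hx
      exacts [Or.inl hx, Or.inr hx, hr x hx]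
    rcases hx' with hx' | rfl
    · rw [List.idxOf_append_of_mem hx']
      exact (List.idxOf_lt_length_of_mem hx').le
    · exact hidxσ.le
  · exact hidxσ ▸ Finset.le_sup (f := fun x => (p ++ σ :: r).idxOf x) (by simp)

theorem wordS_append_cons {p r : List X} {σ : X} (hσ : σ ∉ p)
    (hr : ∀ x ∈ r, x ∈ p ∨ x = σ) : wordS (p ++ σ :: r) = p := by
  rw [wordS, sup_idxOf_append_cons hσ hr, List.take_left]

theorem exists_wordSigma_eq_singleton {w : List X} (hw : w ≠ []) :
    ∃ σ, wordSigma w = [σ] ∧ σ ∉ wordS w ∧ ∀ x ∈ w, x ∈ wordS w ∨ x = σ := by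
  obtain ⟨y, hy, hyk⟩ := Finset.exists_mem_eq_sup w.toFinset
    (List.toFinset_nonempty_iff w |>.mpr hw) fun x => w.idxOf x
  have hs : wordS w = w.take (w.idxOf y) := by rw [wordS, hyk]
  have hy : y ∈ w := List.mem_toFinset.mp hy
  have hk : w.idxOf y < w.length := List.idxOf_lt_length_of_mem hy
  refine ⟨y, ?_, ?_, fun x hx => ?_⟩
  · rw [wordSigma, hyk, List.drop_eq_getElem_cons hk, List.getElem_idxOf hk]
    rfl
  · rw [hs, List.mem_take_iff_idxOf_lt hy]
    exact lt_irrefl _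
  · rw [hs, List.mem_take_iff_idxOf_lt hx]
    have hxy : w.idxOf x ≤ w.idxOf y :=
      hyk ▸ Finset.le_sup (f := fun x => w.idxOf x) (List.mem_toFinset.mpr hx)
    refine hxy.lt_or_eq.imp_right fun heq => ?_
    rw [← List.getElem_idxOf (List.idxOf_lt_length_of_mem hx), ← List.getElem_idxOf hk]
    simp only [heq]

theorem tW_nil (base : List X → List X) (m : ℕ) : tW base m [] = [] := by
  rw [tW, dif_pos rfl]

theorem tW_of_le_two (base : List X → List X) {m : ℕ} (hm : m ≤ 2) {w : List X}
    (hw : w ≠ []) : tW base m w = base w := by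
  rw [tW, dif_neg hw, dif_pos hm]

theorem tW_of_two_lt (base : List X → List X) {m : ℕ} (hm : 2 < m) {w : List X}
    (hw : w ≠ []) :
    tW base m w = tW base m (wordS w) ++ wordSigma w ++ (tW base (m - 1) w.reverse).reverse := by
  rw [tW, dif_neg hw, dif_neg hm.not_ge]

theorem tW_subset {base : List X → List X} (hbase : ∀ w, base w ⊆ w) (m : ℕ) (w : List X) :
    tW base m w ⊆ w := by
  intro x hx
  rcases eq_or_ne w [] with rfl | hw
  · simp [tW_nil] at hx
  rcases le_or_gt m 2 with hm | hm
  · exact hbase w (tW_of_le_two base hm hw ▸ hx)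
  rw [tW_of_two_lt base hm hw] at hx
  simp only [List.mem_append, List.mem_reverse] at hx
  rcases hx with (hx | hx) | hx
  · exact List.take_subset _ _ (tW_subset hbase m (wordS w) hx)
  · exact List.mem_of_mem_drop (List.mem_of_mem_take hx)
  · exact List.mem_reverse.mp (tW_subset hbase (m - 1) w.reverse hx)
termination_by m + w.length
decreasing_by
  · have := wordS_length_lt hw; omega
  · simp only [List.length_reverse]; omega

theorem hW_of_le_two {m : ℕ} (hm : m ≤ 2) (w : List X) : hW m w = w.take 1 := by
  rcases eq_or_ne w [] with rfl | hw
  · exact tW_nil _ m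
  · exact tW_of_le_two _ hm hw

theorem hW_subset (m : ℕ) (w : List X) : hW m w ⊆ w :=
  tW_subset (fun w => List.take_subset 1 w) m w

theorem mem_hW_iff {m : ℕ} (hm : 2 < m) {w : List X} {x : X} : x ∈ hW m w ↔ x ∈ w := by
  refine ⟨fun hx => hW_subset m w hx, fun hx => ?_⟩
  have hw : w ≠ [] := List.ne_nil_of_mem hx
  obtain ⟨σ, hwσ, -, hσ⟩ := exists_wordSigma_eq_singleton hw
  rw [hW, tW_of_two_lt _ hm hw, List.mem_append, List.mem_append, hwσ, List.mem_singleton]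
  exact Or.inl ((hσ x hx).imp_left (mem_hW_iff hm).mpr)
termination_by w.length
decreasing_by exact wordS_length_lt hw

theorem wordS_hW {m : ℕ} (hm : 2 < m) {w : List X} (hw : w ≠ []) :
    wordS (hW m w) = hW m (wordS w) := by
  obtain ⟨σ, hwσ, hσs, hσ⟩ := exists_wordSigma_eq_singleton hw
  have hunfold : hW m w = hW m (wordS w) ++ σ :: (hW (m - 1) w.reverse).reverse := by
    rw [hW, tW_of_two_lt _ hm hw, hwσ, List.append_assoc, List.singleton_append]
  rw [hunfold]
  refine wordS_append_cons (fun h => hσs ((mem_hW_iff hm).mp h)) fun x hx => ?_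
  rw [mem_hW_iff hm]
  exact hσ x (List.mem_reverse.mp (hW_subset _ _ (List.mem_reverse.mp hx)))

theorem wordS_ne_nil {w : List X} (hw : 2 ≤ w.toFinset.card) : wordS w ≠ [] := by
  intro hs
  obtain ⟨σ, -, -, hσ⟩ := exists_wordSigma_eq_singleton (w := w) (by rintro rfl; simp at hw)
  have hsub : w.toFinset ⊆ {σ} := fun x hx => by
    simpa [hs] using hσ x (List.mem_toFinset.mp hx)
  have := Finset.card_le_card hsub
  rw [Finset.card_singleton] at this
  omega

theorem hW_wordS_of_le_two {m : ℕ} (hm : m ≤ 2) {w : List X} (hw : 2 ≤ w.toFinset.card) :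
    hW m (wordS w) = w.take 1 := by
  have hpos := List.length_pos_iff.mpr (wordS_ne_nil hw)
  rw [wordS, List.length_take] at hpos
  rw [hW_of_le_two hm, wordS, List.take_take, min_eq_left (by omega)]

end

theorem hW_s_of_hW_general {X : Type*} [DecidableEq X] (m : ℕ)
    (u v : List X) (hu : 2 ≤ u.toFinset.card) (hv : 2 ≤ v.toFinset.card)
    (h : hW m u = hW m v) :
    hW m (wordS u) = hW m (wordS v) := by
  rcases le_or_gt m 2 with hm | hm
  · rwa [hW_wordS_of_le_two hm hu, hW_wordS_of_le_two hm hv, ← hW_of_le_two hm,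
      ← hW_of_le_two hm]
  · have hu : u ≠ [] := by rintro rfl; simp at hu
    have hv : v ≠ [] := by rintro rfl; simp at hv
    rw [← wordS_hW hm hu, ← wordS_hW hm hv, h]

/-- If `m ≥ 2` and `u, v` are words each containing at least two
distinct letters, then `h_m(u) = h_m(v)` implies `h_m(s(u)) = h_m(s(v))`; i.e. if
the band variety `𝒜_m` satisfies `u ≈ v` then it satisfies `s(u) ≈ s(v)`. -/
theorem hW_s_of_hW {X : Type*} [DecidableEq X] (m : ℕ) (hm : 2 ≤ m)
    (u v : List X) (hu : 2 ≤ u.toFinset.card) (hv : 2 ≤ v.toFinset.card)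
    (h : hW m u = hW m v) :
    hW m (wordS u) = hW m (wordS v) :=
  hW_s_of_hW_general m u v hu hv h
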